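/- arXiv:math/0209211 — 3 statements merged into one kernel-verified Lean document; each statement's English description precedes it below -/
import Mathlib

section
/- Let $\psi$ be an $A$-wavelet with associated spaces $V_j$. Then $\bigcup_{j \in \mathbb{Z}} V_j$ is dense in $L^2(\mathbb{R}^n)$ and $\bigcap_{j \in \mathbb{Z}} V_j = \{0\}$. -/
open MeasureTheory Matrix Complex Real

noncomputable section

abbrev Rn (n : ℕ) := Fin n → ℝ

/-- The real matrix associated to an integer matrix. -/
def matR {n : ℕ} (A : Matrix (Fin n) (Fin n) ℤ) : Matrix (Fin n) (Fin n) ℝ :=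
  A.map (Int.cast : ℤ → ℝ)

/-- A dilation matrix: an integer matrix all of whose (complex) eigenvalues
have absolute value greater than 1. -/
def IsDilationMatrix {n : ℕ} (A : Matrix (Fin n) (Fin n) ℤ) : Prop :=
  ∀ μ : ℂ, (A.map (Int.cast : ℤ → ℂ)).charpoly.IsRoot μ → 1 < ‖μ‖

/-- An integer vector viewed as a real vector. -/
def intVec {n : ℕ} (k : Fin n → ℤ) : Rn n := fun i => (k i : ℝ)

/-- ψ_{j,k}(x) = a^{j/2} ψ(A^j x − k). -/
def wav {n : ℕ} (A : Matrix (Fin n) (Fin n) ℤ) (ψ : Rn n → ℂ) (j : ℤ) (k : Fin n → ℤ) :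
    Rn n → ℂ :=
  fun x => ((A.det.natAbs : ℝ) ^ ((j : ℝ) / 2) : ℝ) * ψ (((matR A) ^ j).mulVec x - intVec k)

/-- ψ is an A-wavelet: the system {ψ_{j,k}} is orthonormal and complete in L²(ℝⁿ). -/
def IsAWavelet {n : ℕ} (A : Matrix (Fin n) (Fin n) ℤ) (ψ : Rn n → ℂ) : Prop :=
  MemLp ψ 2 volume ∧
  (∀ (j j' : ℤ) (k k' : Fin n → ℤ),
      ∫ x, wav A ψ j k x * (starRingEnd ℂ) (wav A ψ j' k' x) =
        if j = j' ∧ k = k' then 1 else 0) ∧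
  (∀ f : Rn n → ℂ, MemLp f 2 volume →
      (∀ (j : ℤ) (k : Fin n → ℤ), ∫ x, f x * (starRingEnd ℂ) (wav A ψ j k x) = 0) →
      f =ᵐ[volume] 0)

/-- The space V_j: closed linear span of {ψ_{l,k} : l < j, k ∈ ℤⁿ} in L². -/
def Vsp {n : ℕ} (A : Matrix (Fin n) (Fin n) ℤ) (ψ : Rn n → ℂ)
    (hm : ∀ (j : ℤ) (k : Fin n → ℤ), MemLp (wav A ψ j k) 2 volume) (j : ℤ) :
    Submodule ℂ (Lp ℂ 2 (volume : Measure (Rn n))) :=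
  (Submodule.span ℂ
    {g | ∃ (l : ℤ) (k : Fin n → ℤ), l < j ∧ g = (hm l k).toLp}).topologicalClosure

/-- Invariance of a closed subspace S of L² under all translations T_{A^{-r}k}, k ∈ ℤⁿ. -/
def GrInvariant {n : ℕ} (A : Matrix (Fin n) (Fin n) ℤ)
    (S : Submodule ℂ (Lp ℂ 2 (volume : Measure (Rn n)))) (r : ℤ) : Prop :=
  ∀ (k : Fin n → ℤ) (f : Rn n → ℂ) (hf : MemLp f 2 volume)
    (hft : MemLp (fun x => f (x - ((matR A) ^ (-r)).mulVec (intVec k))) 2 volume),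
    hf.toLp ∈ S → hft.toLp ∈ S

/-- Fourier transform with the convention f̂(ξ) = ∫ f(x) e^{-i⟨ξ,x⟩} dx. -/
def ftransform {n : ℕ} (f : Rn n → ℂ) (ξ : Rn n) : ℂ :=
  ∫ x, Complex.exp (-(Complex.I) * (∑ i, (ξ i : ℂ) * (x i : ℝ))) * f x

/-- Inner product of a `toLp` with a general L² element. -/
lemma inner_toLp_left {n : ℕ} {g : Rn n → ℂ} (hg : MemLp g 2 volume)
    (f : Lp ℂ 2 (volume : Measure (Rn n))) :
    (inner ℂ (hg.toLp g) f : ℂ) = ∫ x, (starRingEnd ℂ) (g x) * f x := by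
  rw [MeasureTheory.L2.inner_def]
  refine integral_congr_ae ?_
  filter_upwards [hg.coeFn_toLp] with x h1
  rw [h1, RCLike.inner_apply, mul_comm]

lemma inner_toLp_toLp {n : ℕ} {g h : Rn n → ℂ} (hg : MemLp g 2 volume)
    (hh : MemLp h 2 volume) :
    (inner ℂ (hg.toLp g) (hh.toLp h) : ℂ) = ∫ x, (starRingEnd ℂ) (g x) * h x := by
  rw [inner_toLp_left]
  refine integral_congr_ae ?_
  filter_upwards [hh.coeFn_toLp] with x h1
  rw [h1]

/-- If f is orthogonal to all wavelets, it is zero. -/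
lemma eq_zero_of_inner_wav {n : ℕ} {A : Matrix (Fin n) (Fin n) ℤ} {ψ : Rn n → ℂ}
    (hψ : IsAWavelet A ψ)
    (hm : ∀ (j : ℤ) (k : Fin n → ℤ), MemLp (wav A ψ j k) 2 volume)
    (f : Lp ℂ 2 (volume : Measure (Rn n)))
    (h : ∀ (j : ℤ) (k : Fin n → ℤ), (inner ℂ ((hm j k).toLp) f : ℂ) = 0) :
    f = 0 := by
  rw [MeasureTheory.Lp.eq_zero_iff_ae_eq_zero]
  refine hψ.2.2 f (MeasureTheory.Lp.memLp f) ?_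
  intro j k
  have := h j k
  rw [inner_toLp_left] at this
  rw [← this]
  exact integral_congr_ae (Filter.Eventually.of_forall fun x => mul_comm _ _)

/-- If w is orthogonal to all wavelets of scale < j, it is orthogonal to V_j. -/
lemma inner_eq_zero_of_mem_Vsp {n : ℕ} {A : Matrix (Fin n) (Fin n) ℤ} {ψ : Rn n → ℂ}
    (hm : ∀ (j : ℤ) (k : Fin n → ℤ), MemLp (wav A ψ j k) 2 volume) (j : ℤ)
    (w : Lp ℂ 2 (volume : Measure (Rn n)))
    (hw : ∀ (l : ℤ) (k : Fin n → ℤ), l < j → (inner ℂ w ((hm l k).toLp) : ℂ) = 0)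
    {f : Lp ℂ 2 (volume : Measure (Rn n))} (hf : f ∈ Vsp A ψ hm j) :
    (inner ℂ w f : ℂ) = 0 := by
  have hcl : IsClosed ((LinearMap.ker (innerSL ℂ w : _ →ₗ[ℂ] ℂ) : Submodule ℂ
      (Lp ℂ 2 (volume : Measure (Rn n)))) : Set (Lp ℂ 2 (volume : Measure (Rn n)))) :=
    ContinuousLinearMap.isClosed_ker (innerSL ℂ w)
  have hsp : Submodule.span ℂ
      {g | ∃ (l : ℤ) (k : Fin n → ℤ), l < j ∧ g = (hm l k).toLp} ≤
      LinearMap.ker (innerSL ℂ w : _ →ₗ[ℂ] ℂ) := by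
    rw [Submodule.span_le]
    rintro g ⟨l, k, hl, rfl⟩
    simpa using hw l k hl
  have hle : (Submodule.span ℂ
      {g | ∃ (l : ℤ) (k : Fin n → ℤ), l < j ∧ g = (hm l k).toLp}).topologicalClosure ≤
      LinearMap.ker (innerSL ℂ w : _ →ₗ[ℂ] ℂ) :=
    Submodule.topologicalClosure_minimal _ hsp hcl
  simpa using hle hf

lemma Vsp_mono {n : ℕ} {A : Matrix (Fin n) (Fin n) ℤ} {ψ : Rn n → ℂ}
    (hm : ∀ (j : ℤ) (k : Fin n → ℤ), MemLp (wav A ψ j k) 2 volume) :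
    Monotone (Vsp A ψ hm) := by
  intro i j hij
  refine Submodule.topologicalClosure_mono (Submodule.span_mono ?_)
  rintro g ⟨l, k, hl, rfl⟩
  exact ⟨l, k, lt_of_lt_of_le hl hij, rfl⟩

lemma wav_mem_Vsp {n : ℕ} {A : Matrix (Fin n) (Fin n) ℤ} {ψ : Rn n → ℂ}
    (hm : ∀ (j : ℤ) (k : Fin n → ℤ), MemLp (wav A ψ j k) 2 volume) (j : ℤ) (k : Fin n → ℤ) :
    (hm j k).toLp ∈ Vsp A ψ hm (j + 1) :=
  Submodule.le_topologicalClosure _ (Submodule.subset_span ⟨j, k, lt_add_one j, rfl⟩)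

/-- ⋃_j V_j is dense in L²(ℝⁿ) and ⋂_j V_j = {0}. -/
theorem Vsp_dense_and_inter {n : ℕ} (A : Matrix (Fin n) (Fin n) ℤ)
    (hA : IsDilationMatrix A) (ψ : Rn n → ℂ) (hψ : IsAWavelet A ψ)
    (hm : ∀ (j : ℤ) (k : Fin n → ℤ), MemLp (wav A ψ j k) 2 volume) :
    Dense (⋃ j : ℤ, (Vsp A ψ hm j : Set (Lp ℂ 2 (volume : Measure (Rn n))))) ∧
    (⋂ j : ℤ, (Vsp A ψ hm j : Set (Lp ℂ 2 (volume : Measure (Rn n))))) = {0} := by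
  constructor
  · have hdir : Directed (· ≤ ·) (Vsp A ψ hm) := (Vsp_mono hm).directed_le
    rw [show (⋃ j : ℤ, (Vsp A ψ hm j : Set (Lp ℂ 2 (volume : Measure (Rn n))))) =
        ((⨆ j : ℤ, Vsp A ψ hm j : Submodule ℂ _) : Set _) from
      (Submodule.coe_iSup_of_directed _ hdir).symm]
    rw [Submodule.dense_iff_topologicalClosure_eq_top,
      Submodule.topologicalClosure_eq_top_iff]
    rw [Submodule.eq_bot_iff]
    intro f hf
    refine eq_zero_of_inner_wav hψ hm f fun j k => ?_
    exact hf _ (le_iSup (Vsp A ψ hm) (j + 1) (wav_mem_Vsp hm j k))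
  · refine subset_antisymm ?_ ?_
    · intro f hf
      simp only [Set.mem_iInter, SetLike.mem_coe] at hf
      refine eq_zero_of_inner_wav hψ hm f fun j k => ?_
      refine inner_eq_zero_of_mem_Vsp hm j ((hm j k).toLp) ?_ (hf j)
      intro l k' hl
      rw [inner_toLp_toLp]
      have := hψ.2.1 l j k' k
      rw [if_neg (by rintro ⟨rfl, rfl⟩; exact lt_irrefl _ hl)] at this
      rw [← this]
      exact integral_congr_ae (Filter.Eventually.of_forall fun x => mul_comm _ _)
    · rintro f rfl
      simp only [Set.mem_iInter, SetLike.mem_coe]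
      intro j
      exact (Vsp A ψ hm j).zero_mem

end
end

section
/- Let $A$ be a dilation matrix, $B = A^t$, $k \in \mathbb{Z}^n \setminus \{0\}$, and $p \in \mathbb{Z} \setminus \{0\}$. Define $f_\alpha(x) = B^{-p}x - 2\alpha\pi$ for $\alpha \in \mathbb{Z}^n$ and $g_j(x) = B^{-j}x - 2k\pi$ for $j \in \mathbb{Z}$, and let $Y$ be the set of all fixed points of all the maps $f_\alpha$ and $g_j$. Then for any $y \notin \overline{Y}$ there exists $\epsilon > 0$ such that $f_\alpha(N_\epsilon(y)) \cap N_\epsilon(y) = \emptyset$ and $g_j(N_\epsilon(y)) \cap N_\epsilon(y) = \emptyset$ for all $\alpha \in \mathbb{Z}^n$ and $j \in \mathbb{Z}$. -/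
open MeasureTheory Matrix Complex Real

noncomputable section

/-! The maps `f_α` and `g_j` are affine with linear parts `B^{-p}` and `B^{-j}`. If an affine map
`x ↦ Mx - c` moves `y` by `d`, it moves the ball `N_ε(y)` off itself as soon as `(1 + ‖M‖) ε ≤ d`.
The maps `f_α` share the linear part `B^{-p}`, and they move `y` by the distance from
`B^{-p}y - y` to the lattice `2πℤⁿ`, which is positive and attained. Since `A` is a dilation,
`‖B^{-m}‖ → 0` by Gelfand's formula; hence for all but finitely many `j` the map `g_j` is
uniformly repelling from its fixed point (`‖x - z_j‖ ≤ 2‖g_j x - x‖`), and `z_j` lies at distance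
at least `dist(y, Y)` from `y`. The finitely many remaining `g_j` are handled one at a time. -/

open Filter Topology Metric
open scoped NNReal

attribute [local instance] Matrix.linftyOpNormedAddCommGroup Matrix.linftyOpNormedSpace
  Matrix.linftyOpNormedRing Matrix.linftyOpNormedAlgebra

theorem tendsto_pow_atTop_nhds_zero_of_spectralRadius_lt_one {𝔸 : Type*} [NormedRing 𝔸]
    [NormedAlgebra ℂ 𝔸] [CompleteSpace 𝔸] {a : 𝔸} (ha : spectralRadius ℂ a < 1) :
    Tendsto (a ^ ·) atTop (𝓝 0) := by
  obtain ⟨r, hρr, hr1⟩ := ENNReal.lt_iff_exists_nnreal_btwn.mp ha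
  have hpow_le : ∀ᶠ m : ℕ in atTop, ‖a ^ m‖ ≤ (r : ℝ) ^ m := by
    have hgelfand := spectrum.pow_nnnorm_pow_one_div_tendsto_nhds_spectralRadius a
    filter_upwards [hgelfand.eventually_lt_const hρr, eventually_gt_atTop 0] with m hm hm0
    rw [one_div, ENNReal.rpow_inv_lt_iff (by positivity), ENNReal.rpow_natCast,
      ← ENNReal.coe_pow, ENNReal.coe_lt_coe, ← NNReal.coe_lt_coe] at hm
    exact_mod_cast hm.le
  refine tendsto_zero_iff_norm_tendsto_zero.mpr (squeeze_zero' (.of_forall fun _ => norm_nonneg _)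
    hpow_le (tendsto_pow_atTop_nhds_zero_of_lt_one r.coe_nonneg ?_))
  exact_mod_cast hr1

theorem RingHom.mapMatrix_nonsing_inv {ι K L : Type*} [Fintype ι] [DecidableEq ι] [Field K]
    [Field L] (f : K →+* L) (M : Matrix ι ι K) : f.mapMatrix M⁻¹ = (f.mapMatrix M)⁻¹ := by
  rw [Matrix.inv_def, Matrix.inv_def, ← f.map_adjugate, ← f.map_det, Ring.inverse_eq_inv',
    Ring.inverse_eq_inv', ← map_inv₀]
  ext i j
  simp

section BallAvoidance

variable {X : Type*} [MetricSpace X]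

theorem LipschitzWith.disjoint_image_ball {f : X → X} {K : ℝ≥0} (hf : LipschitzWith K f)
    {y : X} {ε : ℝ} (hε : (1 + K) * ε ≤ dist (f y) y) : Disjoint (f '' ball y ε) (ball y ε) := by
  rw [Set.disjoint_left]
  rintro _ ⟨x, hx, rfl⟩ hfx
  rw [mem_ball, dist_comm] at hx
  rw [mem_ball] at hfx
  have hKx : (K : ℝ) * dist y x ≤ K * ε := mul_le_mul_of_nonneg_left hx.le K.coe_nonneg
  linarith [hf.dist_le_mul y x, dist_triangle (f y) (f x) y]

theorem LipschitzWith.eventually_disjoint_image_ball {f : X → X} {K : ℝ≥0}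
    (hf : LipschitzWith K f) {y : X} (hy : f y ≠ y) :
    ∀ᶠ ε in 𝓝[>] 0, Disjoint (f '' ball y ε) (ball y ε) := by
  have hK : (0 : ℝ) < 1 + K := by positivity
  filter_upwards [Ioo_mem_nhdsGT (div_pos (dist_pos.mpr hy) hK)] with ε hε
  exact hf.disjoint_image_ball ((lt_div_iff₀' hK).mp hε.2).le

theorem disjoint_image_ball_of_dist_le_two_mul_dist {f : X → X} {z y : X} {ε : ℝ}
    (hf : ∀ x, dist x z ≤ 2 * dist (f x) x) (hε : 5 * ε ≤ dist y z) :
    Disjoint (f '' ball y ε) (ball y ε) := by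
  rw [Set.disjoint_left]
  rintro _ ⟨x, hx, rfl⟩ hfx
  rw [mem_ball] at hx hfx
  rw [dist_comm] at hx
  linarith [hf x, dist_triangle (f x) y x, dist_triangle y x z]

end BallAvoidance

namespace Matrix

variable {ι : Type*} [Fintype ι] [DecidableEq ι]

theorem isUnit_of_not_isRoot_charpoly_zero {K : Type*} [Field K] {M : Matrix ι ι K}
    (hM : ¬M.charpoly.IsRoot 0) : IsUnit M := by
  rwa [← mem_spectrum_iff_isRoot_charpoly, spectrum.zero_mem_iff, not_not] at hM

theorem spectralRadius_inv_lt_one {M : Matrix ι ι ℂ}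
    (hM : ∀ μ, M.charpoly.IsRoot μ → 1 < ‖μ‖) : spectralRadius ℂ M⁻¹ < 1 := by
  have hu : IsUnit M := isUnit_of_not_isRoot_charpoly_zero fun h0 =>
    absurd (hM 0 h0) (by norm_num)
  rcases subsingleton_or_nontrivial (Matrix ι ι ℂ) with _ | _
  · simp [spectralRadius, spectrum.of_subsingleton]
  refine spectrum.spectralRadius_lt_of_forall_lt _ fun μ hμ => ?_
  have hinv : M⁻¹ = ↑hu.unit⁻¹ := by rw [coe_units_inv, hu.unit_spec]
  rw [hinv, ← spectrum.map_inv, Set.mem_inv, hu.unit_spec,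
    mem_spectrum_iff_isRoot_charpoly] at hμ
  have hnorm := hM _ hμ
  rw [norm_inv] at hnorm
  exact_mod_cast (one_lt_inv_iff₀.mp hnorm).2

theorem linfty_opNorm_map_ofReal (M : Matrix ι ι ℝ) : ‖M.map ((↑) : ℝ → ℂ)‖ = ‖M‖ := by
  simp only [linfty_opNorm_def, map_apply, Complex.nnnorm_real]

def IsExpanding (B : Matrix ι ι ℝ) : Prop :=
  ∀ μ : ℂ, (B.map ((↑) : ℝ → ℂ)).charpoly.IsRoot μ → 1 < ‖μ‖

theorem IsExpanding.isUnit_det {B : Matrix ι ι ℝ} (hB : B.IsExpanding) : IsUnit B.det := by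
  refine (isUnit_iff_isUnit_det B).mp (isUnit_of_not_isRoot_charpoly_zero fun h0 => ?_)
  have h0c := h0.map (f := Complex.ofRealHom)
  rw [← charpoly_map] at h0c
  exact absurd (hB _ h0c) (by norm_num)

theorem IsExpanding.tendsto_norm_inv_pow {B : Matrix ι ι ℝ} (hB : B.IsExpanding) :
    Tendsto (fun m : ℕ => ‖B⁻¹ ^ m‖) atTop (𝓝 0) := by
  have hnorm (m : ℕ) : ‖B⁻¹ ^ m‖ = ‖(B.map ((↑) : ℝ → ℂ))⁻¹ ^ m‖ := by
    have hmap : Complex.ofRealHom.mapMatrix (B⁻¹ ^ m) = (Complex.ofRealHom.mapMatrix B)⁻¹ ^ m := by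
      rw [map_pow, RingHom.mapMatrix_nonsing_inv]
    rw [← linfty_opNorm_map_ofReal]
    exact congrArg norm hmap
  simp only [hnorm]
  exact tendsto_norm_zero.comp
    (tendsto_pow_atTop_nhds_zero_of_spectralRadius_lt_one (spectralRadius_inv_lt_one hB))

theorem lipschitzWith_mulVec_sub (M : Matrix ι ι ℝ) (c : ι → ℝ) :
    LipschitzWith ‖M‖₊ (fun x => M *ᵥ x - c) :=
  LipschitzWith.of_dist_le_mul fun x x' => by
    simpa only [dist_eq_norm, coe_nnnorm, sub_sub_sub_cancel_right, ← mulVec_sub] using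
      linfty_opNorm_mulVec M (x - x')

theorem norm_le_two_mul_norm_mulVec_sub_of_norm_le {M : Matrix ι ι ℝ} (hM : ‖M‖ ≤ 1 / 2)
    (v : ι → ℝ) : ‖v‖ ≤ 2 * ‖M *ᵥ v - v‖ := by
  have hMv : ‖M *ᵥ v‖ ≤ ‖v‖ / 2 :=
    (linfty_opNorm_mulVec M v).trans (by nlinarith [norm_nonneg v])
  linarith [norm_sub_norm_le v (M *ᵥ v), norm_sub_rev v (M *ᵥ v)]

theorem norm_le_two_mul_norm_mulVec_sub_of_mul_eq_one {M N : Matrix ι ι ℝ} (hNM : N * M = 1)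
    (hN : ‖N‖ ≤ 1 / 2) (v : ι → ℝ) : ‖v‖ ≤ 2 * ‖M *ᵥ v - v‖ := by
  have hv : ‖v‖ ≤ ‖M *ᵥ v‖ / 2 := by
    calc ‖v‖ = ‖N *ᵥ (M *ᵥ v)‖ := by rw [mulVec_mulVec, hNM, one_mulVec]
      _ ≤ ‖N‖ * ‖M *ᵥ v‖ := linfty_opNorm_mulVec N _
      _ ≤ ‖M *ᵥ v‖ / 2 := by nlinarith [norm_nonneg (M *ᵥ v)]
  linarith [norm_sub_norm_le (M *ᵥ v) v, norm_nonneg v]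

theorem IsExpanding.norm_le_two_mul_norm_zpow_mulVec_sub {B : Matrix ι ι ℝ}
    (hB : B.IsExpanding) {J : ℕ} (hJ : ∀ m ≥ J, ‖B⁻¹ ^ m‖ ≤ 1 / 2) {j : ℤ} (hj : J ≤ |j|)
    (v : ι → ℝ) : ‖v‖ ≤ 2 * ‖(B ^ j) *ᵥ v - v‖ := by
  obtain ⟨m, rfl | rfl⟩ := Int.eq_nat_or_neg j
  · have hdet : IsUnit (B ^ m).det := by rw [det_pow]; exact hB.isUnit_det.pow m
    refine norm_le_two_mul_norm_mulVec_sub_of_mul_eq_one ?_ (hJ m (by simpa using hj)) v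
    rw [zpow_natCast, inv_pow', nonsing_inv_mul _ hdet]
  · rw [zpow_neg_natCast, ← inv_pow']
    exact norm_le_two_mul_norm_mulVec_sub_of_norm_le (hJ m (by simpa using hj)) v

theorem exists_fixedPoint_dist_le_two_mul_dist {M : Matrix ι ι ℝ}
    (hM : ∀ v, ‖v‖ ≤ 2 * ‖M *ᵥ v - v‖) (c : ι → ℝ) :
    ∃ z, M *ᵥ z - c = z ∧ ∀ x, dist x z ≤ 2 * dist (M *ᵥ x - c) x := by
  have hinj : Function.Injective (M - 1).mulVec := by
    intro v w hvw
    have hker : M *ᵥ (v - w) - (v - w) = 0 := by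
      rw [sub_mulVec, sub_mulVec, one_mulVec, one_mulVec] at hvw
      rw [mulVec_sub, sub_sub_sub_comm, hvw, sub_self]
    simpa [hker, sub_eq_zero] using hM (v - w)
  obtain ⟨z, hz⟩ := mulVec_surjective_iff_isUnit.mpr (mulVec_injective_iff_isUnit.mp hinj) c
  rw [sub_mulVec, one_mulVec] at hz
  refine ⟨z, by rw [← hz]; abel, fun x => ?_⟩
  have hdiff : M *ᵥ x - c - x = M *ᵥ (x - z) - (x - z) := by rw [mulVec_sub, ← hz]; abel
  rw [dist_eq_norm, dist_eq_norm, hdiff]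
  exact hM _

theorem IsExpanding.eventually_forall_disjoint_image_ball_zpow_mulVec_sub {B : Matrix ι ι ℝ}
    (hB : B.IsExpanding) (c : ι → ℝ) {y : ι → ℝ} {δ : ℝ} (hδ : 0 < δ)
    (hfix : ∀ (j : ℤ) (z : ι → ℝ), (B ^ j) *ᵥ z - c = z → δ ≤ dist y z) :
    ∀ᶠ ε in 𝓝[>] 0, ∀ j : ℤ, Disjoint ((fun x => (B ^ j) *ᵥ x - c) '' ball y ε) (ball y ε) := by
  obtain ⟨J, hJ⟩ := eventually_atTop.mp
    (hB.tendsto_norm_inv_pow.eventually_le_const (by norm_num : (0 : ℝ) < 1 / 2))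
  have htail : ∀ᶠ ε in 𝓝[>] 0, ∀ j : ℤ, J ≤ |j| →
      Disjoint ((fun x => (B ^ j) *ᵥ x - c) '' ball y ε) (ball y ε) := by
    filter_upwards [Ioo_mem_nhdsGT (by positivity : (0 : ℝ) < δ / 5)] with ε hε j hj
    obtain ⟨z, hz, hrep⟩ :=
      exists_fixedPoint_dist_le_two_mul_dist (hB.norm_le_two_mul_norm_zpow_mulVec_sub hJ hj) c
    exact disjoint_image_ball_of_dist_le_two_mul_dist hrep (by linarith [hfix j z hz, hε.2])
  have hmid : ∀ᶠ ε in 𝓝[>] 0, ∀ j ∈ Finset.Ioo (-(J : ℤ)) J,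
      Disjoint ((fun x => (B ^ j) *ᵥ x - c) '' ball y ε) (ball y ε) :=
    (Finset.eventually_all _).mpr fun j _ =>
      (lipschitzWith_mulVec_sub _ c).eventually_disjoint_image_ball
        fun hy => (hδ.trans_le (hfix j y hy)).ne' (dist_self y)
  filter_upwards [htail, hmid] with ε htail hmid j
  by_cases hj : (J : ℤ) ≤ |j|
  · exact htail j hj
  · exact hmid j (Finset.mem_Ioo.mpr (abs_lt.mp (not_le.mp hj)))

end Matrix

theorem norm_le_norm_intVec {n : ℕ} (α : Fin n → ℤ) : ‖α‖ ≤ ‖intVec α‖ :=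
  (pi_norm_le_iff_of_nonneg (norm_nonneg _)).mpr fun i => by
    simpa [intVec, Int.norm_eq_abs] using norm_le_pi_norm (intVec α) i

theorem exists_pos_forall_le_norm_sub_smul_intVec {n : ℕ} {v : Rn n} {r : ℝ} (hr : r ≠ 0)
    (hv : ∀ α, v ≠ r • intVec α) : ∃ d > 0, ∀ α, d ≤ ‖v - r • intVec α‖ := by
  have hnorm : Tendsto (fun α : Fin n → ℤ => ‖α‖) cofinite atTop := by
    rw [← cocompact_eq_cofinite]
    exact tendsto_norm_cocompact_atTop
  have htend : Tendsto (fun α => ‖v - r • intVec α‖) cofinite atTop := by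
    refine tendsto_atTop_mono (fun α => ?_)
      (tendsto_atTop_add_const_right _ (-‖v‖) (hnorm.const_mul_atTop (abs_pos.mpr hr)))
    have := norm_le_norm_intVec α
    have := norm_sub_norm_le (r • intVec α) v
    rw [norm_smul, Real.norm_eq_abs, norm_sub_rev] at this
    nlinarith [abs_nonneg r]
  obtain ⟨α₀, hα₀⟩ := htend.exists_forall_le
  exact ⟨_, norm_pos_iff.mpr (sub_ne_zero.mpr (hv α₀)), hα₀⟩

theorem eventually_forall_disjoint_image_ball_mulVec_sub_smul_intVec {n : ℕ}
    (M : Matrix (Fin n) (Fin n) ℝ) {r : ℝ} (hr : r ≠ 0) {y : Rn n}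
    (hy : ∀ α, M *ᵥ y - r • intVec α ≠ y) :
    ∀ᶠ ε in 𝓝[>] 0, ∀ α,
      Disjoint ((fun x => M *ᵥ x - r • intVec α) '' ball y ε) (ball y ε) := by
  obtain ⟨d, hd, hdα⟩ := exists_pos_forall_le_norm_sub_smul_intVec (v := M *ᵥ y - y) hr
    fun α h => hy α (by rw [← h, sub_sub_cancel])
  have hK : (0 : ℝ) < 1 + ‖M‖₊ := by positivity
  filter_upwards [Ioo_mem_nhdsGT (div_pos hd hK)] with ε hε α
  refine (Matrix.lipschitzWith_mulVec_sub M _).disjoint_image_ball ?_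
  rw [dist_eq_norm, sub_right_comm]
  exact ((lt_div_iff₀' hK).mp hε.2).le.trans (hdα α)

theorem IsDilationMatrix.isExpanding_transpose_matR {n : ℕ} {A : Matrix (Fin n) (Fin n) ℤ}
    (hA : IsDilationMatrix A) : (matR A)ᵀ.IsExpanding := by
  intro μ hμ
  have hmap : (matR A)ᵀ.map ((↑) : ℝ → ℂ) = (A.map (Int.cast : ℤ → ℂ))ᵀ := by
    ext
    simp [matR]
  rw [hmap, charpoly_transpose] at hμ
  exact hA μ hμ

theorem ball_avoiding_maps_general {n : ℕ} (A : Matrix (Fin n) (Fin n) ℤ) (hA : IsDilationMatrix A)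
    (k : Fin n → ℤ) (p : ℤ) (y : Rn n)
    (hy : y ∉ closure {x : Rn n |
      (∃ α : Fin n → ℤ, ((matR A)ᵀ ^ (-p)).mulVec x - (2 * π) • intVec α = x) ∨
      (∃ j : ℤ, ((matR A)ᵀ ^ (-j)).mulVec x - (2 * π) • intVec k = x)}) :
    ∃ ε > 0,
      (∀ α : Fin n → ℤ,
        ((fun x => ((matR A)ᵀ ^ (-p)).mulVec x - (2 * π) • intVec α) '' Metric.ball y ε) ∩
          Metric.ball y ε = ∅) ∧
      (∀ j : ℤ,
        ((fun x => ((matR A)ᵀ ^ (-j)).mulVec x - (2 * π) • intVec k) '' Metric.ball y ε) ∩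
          Metric.ball y ε = ∅) := by
  rw [Metric.mem_closure_iff] at hy
  push Not at hy
  obtain ⟨δ, hδ, hY⟩ := hy
  have hF := eventually_forall_disjoint_image_ball_mulVec_sub_smul_intVec ((matR A)ᵀ ^ (-p))
    (by positivity : 2 * π ≠ 0) fun α hα => (hδ.trans_le (hY y (Or.inl ⟨α, hα⟩))).ne' (dist_self y)
  have hG := hA.isExpanding_transpose_matR.eventually_forall_disjoint_image_ball_zpow_mulVec_sub
    ((2 * π) • intVec k) hδ fun j z hz => hY z (Or.inr ⟨-j, by rwa [neg_neg]⟩)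
  obtain ⟨ε, ⟨hFε, hGε⟩, hε⟩ := ((hF.and hG).and self_mem_nhdsWithin).exists
  exact ⟨ε, hε, fun α => Set.disjoint_iff_inter_eq_empty.mp (hFε α),
    fun j => Set.disjoint_iff_inter_eq_empty.mp (hGε (-j))⟩

/-- For y outside the closure of the fixed point set of the maps f_α, g_j, some ball
around y is disjoint from all its images under these maps. -/
theorem ball_avoiding_maps {n : ℕ} (A : Matrix (Fin n) (Fin n) ℤ) (hA : IsDilationMatrix A)
    (k : Fin n → ℤ) (hk : k ≠ 0) (p : ℤ) (hp : p ≠ 0) (y : Rn n)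
    (hy : y ∉ closure {x : Rn n |
      (∃ α : Fin n → ℤ, ((matR A)ᵀ ^ (-p)).mulVec x - (2 * π) • intVec α = x) ∨
      (∃ j : ℤ, ((matR A)ᵀ ^ (-j)).mulVec x - (2 * π) • intVec k = x)}) :
    ∃ ε > 0,
      (∀ α : Fin n → ℤ,
        ((fun x => ((matR A)ᵀ ^ (-p)).mulVec x - (2 * π) • intVec α) '' Metric.ball y ε) ∩
          Metric.ball y ε = ∅) ∧
      (∀ j : ℤ,
        ((fun x => ((matR A)ᵀ ^ (-j)).mulVec x - (2 * π) • intVec k) '' Metric.ball y ε) ∩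
          Metric.ball y ε = ∅) :=
  ball_avoiding_maps_general A hA k p y hy

end
end

section
/- Let $A$ be a dilation matrix, $B = A^t$, $p \in \mathbb{Z}\setminus\{0\}$, and $k \in \mathbb{Z}^n\setminus\{0\}$. The set of fixed points of the family of maps $g_j(x) = B^{-j}x - 2k\pi$, $j \in \mathbb{Z}\setminus\{0\}$, is $\{2\pi(B^{-j} - I)^{-1}k : j \in \mathbb{Z}\setminus\{0\}\}$, and the set of limit points of this set is contained in $\{0, -2k\pi\}$. -/
open MeasureTheory Matrix Complex Real

noncomputable section

section AuxGJ

open Filter Polynomial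

variable {N : ℕ}

private lemma charpoly_eval_eq (M : Matrix (Fin N) (Fin N) ℂ) (μ : ℂ) :
    M.charpoly.eval μ = ((algebraMap ℂ (Matrix (Fin N) (Fin N) ℂ) μ) - M).det := by
  rw [Matrix.charpoly, eval_det, matPolyEquiv_charmatrix]
  congr 1
  rw [Polynomial.eval_sub, Polynomial.eval_X, Polynomial.eval_C,
    Matrix.algebraMap_eq_diagonal, Matrix.scalar_apply]
  congr 1

private lemma mem_spectrum_iff_root (M : Matrix (Fin N) (Fin N) ℂ) (μ : ℂ) :
    μ ∈ spectrum ℂ M ↔ M.charpoly.IsRoot μ := by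
  rw [spectrum.mem_iff, Matrix.isUnit_iff_isUnit_det, isUnit_iff_ne_zero, not_ne_iff,
    Polynomial.IsRoot, charpoly_eval_eq]

private lemma charpoly_transpose_eq (M : Matrix (Fin N) (Fin N) ℂ) :
    Mᵀ.charpoly = M.charpoly := by
  rw [Matrix.charpoly, Matrix.charpoly, ← Matrix.det_transpose]
  congr 1
  ext i j
  by_cases h : i = j
  · subst h
    simp
  · simp [Matrix.transpose_apply, Matrix.charmatrix_apply_ne _ _ _ h,
      Matrix.charmatrix_apply_ne _ _ _ (Ne.symm h)]

private lemma det_one_sub_pow_ne (M : Matrix (Fin N) (Fin N) ℂ)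
    (hM : ∀ μ ∈ spectrum ℂ M, 1 < ‖μ‖) {m : ℕ} (hm : 0 < m) :
    (1 - M ^ m).det ≠ 0 := by
  intro h
  have h1 : (1 : ℂ) ∈ spectrum ℂ (M ^ m) := by
    rw [spectrum.mem_iff, Matrix.isUnit_iff_isUnit_det, isUnit_iff_ne_zero, not_ne_iff]
    rw [RingHom.map_one]
    exact h
  have h2 : spectrum ℂ (M ^ m) = (· ^ m) '' spectrum ℂ M := by
    have hd : (0 : WithBot ℕ) < (X ^ m : ℂ[X]).degree := by
      rw [Polynomial.degree_X_pow]
      exact_mod_cast hm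
    have := spectrum.map_polynomial_aeval_of_degree_pos M (X ^ m : ℂ[X]) hd
    simpa [Polynomial.aeval_X_pow] using this
  rw [h2] at h1
  obtain ⟨μ, hμ, hpow⟩ := h1
  have hpow' : μ ^ m = 1 := hpow
  have hgt := hM μ hμ
  have habs : ‖μ ^ m‖ = 1 := by rw [hpow']; simp
  rw [norm_pow] at habs
  have : (1 : ℝ) < ‖μ‖ ^ m := one_lt_pow₀ hgt hm.ne'
  rw [habs] at this
  exact lt_irrefl _ this

section NormStuff

attribute [local instance] Matrix.linftyOpNormedAddCommGroup Matrix.linftyOpNormedSpace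
  Matrix.linftyOpNormedRing Matrix.linftyOpNormedAlgebra

private lemma entry_nnnorm_le (M : Matrix (Fin N) (Fin N) ℂ) (i j : Fin N) :
    ‖M i j‖₊ ≤ ‖M‖₊ := by
  rw [Matrix.linfty_opNNNorm_def]
  refine le_trans ?_ (Finset.le_sup (Finset.mem_univ i))
  exact Finset.single_le_sum (f := fun j => ‖M i j‖₊) (fun _ _ => zero_le) (Finset.mem_univ j)

private lemma pow_entries_tendsto (C : Matrix (Fin N) (Fin N) ℝ)
    (h : ∀ μ ∈ spectrum ℂ (C.map (Complex.ofReal)), ‖μ‖ < 1) (i j : Fin N) :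
    Tendsto (fun m : ℕ => (C ^ m) i j) atTop (nhds 0) := by
  haveI : Nonempty (Fin N) := ⟨i⟩
  set Cc : Matrix (Fin N) (Fin N) ℂ := C.map Complex.ofReal with hCc
  have hrad : spectralRadius ℂ Cc < 1 := by
    have h1 := spectrum.spectralRadius_lt_of_forall_lt (a := Cc) (r := 1)
      (fun z hz => by
        have := h z hz
        rw [← NNReal.coe_lt_one, coe_nnnorm]
        exact this)
    simpa using h1
  obtain ⟨r, hr1, hr2⟩ := ENNReal.lt_iff_exists_nnreal_btwn.mp hrad
  have hr2' : (r : ℝ) < 1 := by exact_mod_cast hr2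
  have hG := spectrum.pow_nnnorm_pow_one_div_tendsto_nhds_spectralRadius Cc
  have hev : ∀ᶠ m : ℕ in atTop, (‖Cc ^ m‖₊ : ENNReal) ^ (1 / (m : ℝ)) < r :=
    hG.eventually_lt_const hr1
  have hev2 : ∀ᶠ m : ℕ in atTop, ‖Cc ^ m‖ ≤ (r : ℝ) ^ m := by
    filter_upwards [hev, eventually_ge_atTop 1] with m hm hm1
    have hm0 : (m : ℝ) ≠ 0 := by positivity
    have : ((‖Cc ^ m‖₊ : ENNReal) ^ (1 / (m : ℝ))) ^ (m : ℝ) < (r : ENNReal) ^ (m : ℝ) :=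
      ENNReal.rpow_lt_rpow hm (by positivity)
    rw [← ENNReal.rpow_mul, one_div, inv_mul_cancel₀ hm0, ENNReal.rpow_one,
      ENNReal.rpow_natCast] at this
    have := le_of_lt this
    rw [← ENNReal.coe_pow, ENNReal.coe_le_coe] at this
    calc ‖Cc ^ m‖ = ((‖Cc ^ m‖₊ : ℝ)) := rfl
      _ ≤ ((r ^ m : NNReal) : ℝ) := by exact_mod_cast this
      _ = (r : ℝ) ^ m := by push_cast; ring
  have hentry : ∀ᶠ m : ℕ in atTop, ‖(C ^ m) i j‖ ≤ (r : ℝ) ^ m := by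
    filter_upwards [hev2] with m hm
    have hmap : Cc ^ m = (C ^ m).map Complex.ofReal := by
      rw [hCc]
      exact (RingHom.map_pow (Complex.ofRealHom.mapMatrix) C m).symm
    have h1 : ‖(C ^ m) i j‖ = ‖(Cc ^ m) i j‖ := by
      rw [hmap, Matrix.map_apply, Complex.norm_real]
    rw [h1]
    calc ‖(Cc ^ m) i j‖ ≤ ‖Cc ^ m‖ := entry_nnnorm_le (Cc ^ m) i j
      _ ≤ (r : ℝ) ^ m := hm
  exact squeeze_zero_norm' hentry
    (tendsto_pow_atTop_nhds_zero_of_lt_one r.coe_nonneg hr2')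

end NormStuff

end AuxGJ

open Filter

/-- The fixed points of the maps g_j(x) = B⁻ʲx - 2kπ, j ≠ 0, form the set
{2π(B⁻ʲ - I)⁻¹k : j ≠ 0}, whose limit points are contained in {0, -2kπ}. -/
theorem fixed_points_gj {n : ℕ} (A : Matrix (Fin n) (Fin n) ℤ) (hA : IsDilationMatrix A)
    (k : Fin n → ℤ) (hk : k ≠ 0) :
    ({x : Rn n | ∃ j : ℤ, j ≠ 0 ∧ ((matR A)ᵀ ^ (-j)).mulVec x - (2 * π) • intVec k = x} =
      {x : Rn n | ∃ j : ℤ, j ≠ 0 ∧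
        x = (2 * π) • (((matR A)ᵀ ^ (-j) - 1)⁻¹.mulVec (intVec k))}) ∧
    {x : Rn n | ∀ ε > 0, ∃ z ∈ {x : Rn n | ∃ j : ℤ, j ≠ 0 ∧
        x = (2 * π) • (((matR A)ᵀ ^ (-j) - 1)⁻¹.mulVec (intVec k))}, z ≠ x ∧ dist z x < ε} ⊆
      {0, -(2 * π) • intVec k} := by
  classical
  rcases Nat.eq_zero_or_pos n with hn | hn
  · subst hn
    exact absurd (funext fun i => i.elim0) hk
  set B : Matrix (Fin n) (Fin n) ℝ := (matR A)ᵀ with hB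
  set K : Rn n := intVec k with hK
  -- basic spectral facts
  have hBcT : B.map Complex.ofReal = (A.map (Int.cast : ℤ → ℂ))ᵀ := by
    ext i j
    simp [hB, matR, Matrix.map_apply, Matrix.transpose_apply]
  have hspecB : ∀ μ ∈ spectrum ℂ (B.map Complex.ofReal), 1 < ‖μ‖ := by
    intro μ hμ
    rw [mem_spectrum_iff_root, hBcT, charpoly_transpose_eq] at hμ
    exact hA μ hμ
  have hdetBc : (B.map Complex.ofReal).det ≠ 0 := by
    intro h0
    have h1 : (0 : ℂ) ∈ spectrum ℂ (B.map Complex.ofReal) :=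
      (spectrum.zero_mem_iff ℂ).mpr
        (fun hu => ((Matrix.isUnit_iff_isUnit_det _).mp hu).ne_zero h0)
    have := hspecB 0 h1
    rw [norm_zero] at this
    exact absurd this (by norm_num)
  have hdetmap : (B.map Complex.ofReal).det = (B.det : ℂ) :=
    (RingHom.map_det Complex.ofRealHom B).symm
  have hdetB : IsUnit B.det := by
    rw [isUnit_iff_ne_zero]
    intro h0
    apply hdetBc
    rw [hdetmap, h0, Complex.ofReal_zero]
  -- determinant of B ^ m - 1 is nonzero for m > 0
  have hdet1 : ∀ m : ℕ, 0 < m → (B ^ m - 1).det ≠ 0 := by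
    intro m hm h0
    have hmapeq : ((B ^ m - 1).map Complex.ofReal) =
        (B.map Complex.ofReal) ^ m - 1 := by
      have := RingHom.mapMatrix_apply (f := Complex.ofRealHom) (M := B ^ m - 1)
      calc (B ^ m - 1).map Complex.ofReal
          = Complex.ofRealHom.mapMatrix (B ^ m - 1) := rfl
        _ = (Complex.ofRealHom.mapMatrix B) ^ m - 1 := by
            rw [_root_.map_sub, _root_.map_pow, _root_.map_one]
        _ = (B.map Complex.ofReal) ^ m - 1 := rfl
    have h1 : ((B.map Complex.ofReal) ^ m - 1).det = 0 := by
      rw [← hmapeq]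
      have hd : ((B ^ m - 1).map Complex.ofReal).det = Complex.ofReal ((B ^ m - 1).det) :=
        (RingHom.map_det Complex.ofRealHom (B ^ m - 1)).symm
      rw [hd, h0, Complex.ofReal_zero]
    have h2 : ((1 : Matrix (Fin n) (Fin n) ℂ) - (B.map Complex.ofReal) ^ m).det = 0 := by
      have : (1 : Matrix (Fin n) (Fin n) ℂ) - (B.map Complex.ofReal) ^ m =
          -((B.map Complex.ofReal) ^ m - 1) := (neg_sub _ _).symm
      rw [this, Matrix.det_neg, h1, mul_zero]
    exact det_one_sub_pow_ne _ hspecB hm h2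
  -- invertibility of B ^ (-j) - 1 for j ≠ 0
  have hdet_j : ∀ j : ℤ, j ≠ 0 → IsUnit (B ^ (-j) - 1).det := by
    intro j hj
    rcases lt_or_gt_of_ne hj with hneg | hpos
    · have hm : 0 < (-j).toNat := by omega
      have hBj : B ^ (-j) = B ^ ((-j).toNat) := by
        rw [← zpow_natCast B ((-j).toNat)]
        congr 1
        omega
      rw [hBj, isUnit_iff_ne_zero]
      exact hdet1 _ hm
    · have hm : 0 < j.toNat := by omega
      have hBj : B ^ (-j) = (B ^ (j.toNat))⁻¹ := by
        rw [← Matrix.zpow_neg_natCast B (j.toNat)]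
        congr 1
        omega
      have hu : IsUnit (B ^ (j.toNat)).det := by
        rw [Matrix.det_pow]
        exact hdetB.pow _
      have hfact : (B ^ (j.toNat))⁻¹ - 1 =
          (B ^ (j.toNat))⁻¹ * (1 - B ^ (j.toNat)) := by
        rw [mul_sub, mul_one, Matrix.nonsing_inv_mul _ hu]
      rw [hBj, hfact, Matrix.det_mul, isUnit_iff_ne_zero]
      apply mul_ne_zero
      · rw [Matrix.det_nonsing_inv, Ring.inverse_eq_inv]
        exact inv_ne_zero hu.ne_zero
      · intro h0
        apply hdet1 _ hm
        have : (B ^ (j.toNat) - 1) = -(1 - B ^ (j.toNat)) := (neg_sub _ _).symm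
        rw [this, Matrix.det_neg, h0, mul_zero]
  -- the key fixed-point equivalence
  have key : ∀ (j : ℤ), j ≠ 0 → ∀ x : Rn n,
      ((B ^ (-j)).mulVec x - (2 * π) • K = x) ↔
        (x = (2 * π) • ((B ^ (-j) - 1)⁻¹.mulVec K)) := by
    intro j hj x
    have hM := hdet_j j hj
    constructor
    · intro h
      have ha : (B ^ (-j)).mulVec x = x + (2 * π) • K := sub_eq_iff_eq_add.mp h
      have h2 : (B ^ (-j) - 1).mulVec x = (2 * π) • K := by
        rw [Matrix.sub_mulVec, Matrix.one_mulVec, ha, add_sub_cancel_left]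
      have h3 : (B ^ (-j) - 1)⁻¹.mulVec ((B ^ (-j) - 1).mulVec x) = x := by
        rw [Matrix.mulVec_mulVec, Matrix.nonsing_inv_mul _ hM, Matrix.one_mulVec]
      rw [← h3, h2, Matrix.mulVec_smul]
    · intro h
      have h2 : (B ^ (-j) - 1).mulVec x = (2 * π) • K := by
        rw [h, Matrix.mulVec_smul, Matrix.mulVec_mulVec, Matrix.mul_nonsing_inv _ hM,
          Matrix.one_mulVec]
      have h3 : (B ^ (-j)).mulVec x - x = (2 * π) • K := by
        rw [← h2, Matrix.sub_mulVec, Matrix.one_mulVec]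
      have h4 : (B ^ (-j)).mulVec x = (2 * π) • K + x := sub_eq_iff_eq_add.mp h3
      rw [h4, add_sub_cancel_left]
  constructor
  · ext x
    simp only [Set.mem_setOf_eq]
    constructor
    · rintro ⟨j, hj, hfix⟩
      exact ⟨j, hj, (key j hj x).mp hfix⟩
    · rintro ⟨j, hj, hfix⟩
      exact ⟨j, hj, (key j hj x).mpr hfix⟩
  -- second part : limit points
  set f : ℤ → Rn n := fun j => (2 * π) • ((B ^ (-j) - 1)⁻¹.mulVec K) with hf
  set C : Matrix (Fin n) (Fin n) ℝ := B⁻¹ with hC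
  have hCcinv : C.map Complex.ofReal = (B.map Complex.ofReal)⁻¹ := by
    symm
    apply Matrix.inv_eq_left_inv
    calc (C.map Complex.ofReal) * (B.map Complex.ofReal)
        = Complex.ofRealHom.mapMatrix C * Complex.ofRealHom.mapMatrix B := rfl
      _ = Complex.ofRealHom.mapMatrix (C * B) := (_root_.map_mul _ C B).symm
      _ = Complex.ofRealHom.mapMatrix 1 := by rw [hC, Matrix.nonsing_inv_mul _ hdetB]
      _ = 1 := _root_.map_one _
  have hCcu : IsUnit (B.map Complex.ofReal)⁻¹ := by
    rw [Matrix.isUnit_iff_isUnit_det, Matrix.det_nonsing_inv, Ring.inverse_eq_inv,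
      isUnit_iff_ne_zero]
    exact inv_ne_zero hdetBc
  have hspecC : ∀ μ ∈ spectrum ℂ (C.map Complex.ofReal), ‖μ‖ < 1 := by
    intro μ hμ
    have hμ0 : μ ≠ 0 := by
      rintro rfl
      rw [hCcinv] at hμ
      exact ((spectrum.zero_mem_iff ℂ).mp hμ) hCcu
    haveI := (B.map Complex.ofReal).invertibleOfIsUnitDet (isUnit_iff_ne_zero.mpr hdetBc)
    set u : (Matrix (Fin n) (Fin n) ℂ)ˣ := unitOfInvertible (B.map Complex.ofReal) with hu
    have hu2 : ((u⁻¹ : (Matrix (Fin n) (Fin n) ℂ)ˣ) : Matrix (Fin n) (Fin n) ℂ)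
        = (B.map Complex.ofReal)⁻¹ := by
      rw [← Matrix.invOf_eq_nonsing_inv]
      rfl
    have hmem : (((Units.mk0 μ hμ0)⁻¹ : ℂˣ) : ℂ) ∈ spectrum ℂ ((u : Matrix (Fin n) (Fin n) ℂ)) := by
      rw [spectrum.inv_mem_iff, inv_inv, hu2, ← hCcinv]
      exact hμ
    have habs := hspecB _ hmem
    have hval : (((Units.mk0 μ hμ0)⁻¹ : ℂˣ) : ℂ) = μ⁻¹ := rfl
    rw [hval, norm_inv] at habs
    exact ((one_lt_inv_iff₀.mp habs).2)
  have htoNat : Tendsto Int.toNat atTop atTop :=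
    tendsto_atTop_atTop.mpr fun b => ⟨(b : ℤ), fun a ha => by omega⟩
  have hCmat : Tendsto (fun m : ℕ => C ^ m) atTop (nhds 0) := by
    refine tendsto_pi_nhds.mpr ?_
    intro i
    rw [tendsto_pi_nhds]
    intro l
    simpa using pow_entries_tendsto C hspecC i l
  have hBneg : Tendsto (fun j : ℤ => B ^ (-j)) atTop (nhds 0) := by
    refine (hCmat.comp htoNat).congr' ?_
    filter_upwards [eventually_ge_atTop (1 : ℤ)] with j hj
    show C ^ j.toNat = B ^ (-j)
    rw [hC, Matrix.inv_pow', ← Matrix.zpow_neg_natCast]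
    congr 1
    omega
  have hMtop : Tendsto (fun j : ℤ => B ^ (-j) - 1) atTop
      (nhds (-1 : Matrix (Fin n) (Fin n) ℝ)) := by
    have := hBneg.sub (tendsto_const_nhds (x := (1 : Matrix (Fin n) (Fin n) ℝ)))
    simpa using this
  have hdetneg : ((-1 : Matrix (Fin n) (Fin n) ℝ)).det ≠ 0 := by
    rw [show (-1 : Matrix (Fin n) (Fin n) ℝ) = -(1 : Matrix (Fin n) (Fin n) ℝ) from rfl,
      Matrix.det_neg, Matrix.det_one, mul_one]
    exact pow_ne_zero _ (by norm_num)
  have hinvcont : ContinuousAt Inv.inv (-1 : Matrix (Fin n) (Fin n) ℝ) :=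
    continuousAt_matrix_inv _ (by rw [Ring.inverse_eq_inv']; exact continuousAt_inv₀ hdetneg)
  have hgcont : ContinuousAt
      (fun M : Matrix (Fin n) (Fin n) ℝ => (2 * π) • (M⁻¹.mulVec K)) (-1) := by
    exact (((continuous_id.matrix_mulVec continuous_const).const_smul
      (2 * π)).continuousAt).comp hinvcont
  have hneginv : ((-1 : Matrix (Fin n) (Fin n) ℝ))⁻¹ = -1 := by
    apply Matrix.inv_eq_left_inv
    simp
  have htop : Tendsto f atTop (nhds (-(2 * π) • K)) := by
    have h1 := (hgcont.tendsto).comp hMtop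
    have h2 : (2 * π) • (((-1 : Matrix (Fin n) (Fin n) ℝ))⁻¹.mulVec K) = -(2 * π) • K := by
      rw [hneginv, Matrix.neg_mulVec, Matrix.one_mulVec, smul_neg, ← neg_smul]
    rw [h2] at h1
    exact h1
  -- behavior at -infinity
  have hinvcont1 : ContinuousAt Inv.inv
      ((1 : Matrix (Fin n) (Fin n) ℝ) - 0) := by
    apply continuousAt_matrix_inv
    rw [Ring.inverse_eq_inv']
    apply continuousAt_inv₀
    simp
  have hhcont : ContinuousAt
      (fun D : Matrix (Fin n) (Fin n) ℝ => (2 * π) • ((D * (1 - D)⁻¹).mulVec K)) 0 := by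
    have hc1 : ContinuousAt (fun D : Matrix (Fin n) (Fin n) ℝ => (1 - D)⁻¹) 0 :=
      hinvcont1.comp ((continuous_const.sub continuous_id).continuousAt)
    have hc2 : ContinuousAt (fun D : Matrix (Fin n) (Fin n) ℝ => D * (1 - D)⁻¹) 0 :=
      (continuousAt_id.mul hc1)
    exact (((continuous_id.matrix_mulVec continuous_const).const_smul
      (2 * π)).continuousAt).comp hc2
  have hbot : Tendsto f atBot (nhds 0) := by
    have hD : Tendsto (fun j : ℤ => C ^ ((-j).toNat)) atBot (nhds 0) :=
      hCmat.comp (htoNat.comp tendsto_neg_atBot_atTop)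
    have h1 := (hhcont.tendsto).comp hD
    have hval : (2 * π) • (((0 : Matrix (Fin n) (Fin n) ℝ) *
        (1 - 0)⁻¹).mulVec K) = 0 := by
      rw [zero_mul, Matrix.zero_mulVec, smul_zero]
    rw [hval] at h1
    refine h1.congr' ?_
    filter_upwards [eventually_le_atBot (-1 : ℤ)] with j hj
    have hm : 0 < (-j).toNat := by omega
    have hjm : (((-j).toNat : ℕ) : ℤ) = -j := by omega
    have hBj : B ^ (-j) = B ^ ((-j).toNat) := by
      rw [← zpow_natCast B ((-j).toNat)]
      congr 1
      omega
    have hu : IsUnit (B ^ ((-j).toNat)).det := by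
      rw [Matrix.det_pow]; exact hdetB.pow _
    have key2 : B ^ ((-j).toNat) - 1 = (1 - C ^ ((-j).toNat)) * B ^ ((-j).toNat) := by
      rw [sub_mul, one_mul, hC, Matrix.inv_pow', Matrix.nonsing_inv_mul _ hu]
    have hinv2 : (B ^ ((-j).toNat) - 1)⁻¹ =
        C ^ ((-j).toNat) * (1 - C ^ ((-j).toNat))⁻¹ := by
      rw [key2, Matrix.mul_inv_rev, hC, Matrix.inv_pow']
    show (2 * π) • ((C ^ ((-j).toNat) * (1 - C ^ ((-j).toNat))⁻¹).mulVec K) = f j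
    rw [hf]
    simp only
    rw [hBj, hinv2]
  -- conclude
  intro x hx
  simp only [Set.mem_insert_iff, Set.mem_singleton_iff]
  by_contra hcon
  push_neg at hcon
  obtain ⟨hx0, hx1⟩ := hcon
  have hδ1 : 0 < dist x 0 := dist_pos.mpr hx0
  have hδ2 : 0 < dist x (-(2 * π) • K) := dist_pos.mpr hx1
  have h1 := Metric.tendsto_nhds.mp htop _ (half_pos hδ2)
  have h2 := Metric.tendsto_nhds.mp hbot _ (half_pos hδ1)
  obtain ⟨J1, hJ1⟩ := eventually_atTop.mp h1
  obtain ⟨J2, hJ2⟩ := eventually_atBot.mp h2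
  set S : Finset (Rn n) := (Finset.Icc J2 J1).image f with hS
  have hEx : ∃ ρ : ℝ, 0 < ρ ∧ ∀ z ∈ S.erase x, ρ ≤ dist z x := by
    by_cases hT : (S.erase x).Nonempty
    · refine ⟨(S.erase x).inf' hT (fun z => dist z x), ?_, ?_⟩
      · rw [Finset.lt_inf'_iff]
        intro z hz
        exact dist_pos.mpr (Finset.ne_of_mem_erase hz)
      · intro z hz
        exact Finset.inf'_le _ hz
    · exact ⟨1, one_pos, fun z hz => absurd ⟨z, hz⟩ hT⟩
  obtain ⟨ρ, hρ0, hρle⟩ := hEx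
  set ε : ℝ := min (min (dist x 0 / 2) (dist x (-(2 * π) • K) / 2)) ρ with hε
  have hεpos : 0 < ε := lt_min (lt_min (half_pos hδ1) (half_pos hδ2)) hρ0
  obtain ⟨z, hzmem, hzx, hzd⟩ := hx ε hεpos
  obtain ⟨j, hj0, hzeq⟩ := hzmem
  have hzf : z = f j := hzeq
  by_cases hc1 : J1 ≤ j
  · have hnear := hJ1 j hc1
    have htri : dist x (-(2 * π) • K) ≤ dist x (f j) + dist (f j) (-(2 * π) • K) :=
      dist_triangle _ _ _
    have hdc : dist x (f j) = dist z x := by rw [hzf, dist_comm]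
    have hε2 : ε ≤ dist x (-(2 * π) • K) / 2 :=
      le_trans (min_le_left _ _) (min_le_right _ _)
    rw [hdc] at htri
    linarith
  · by_cases hc2 : j ≤ J2
    · have hnear := hJ2 j hc2
      have htri : dist x 0 ≤ dist x (f j) + dist (f j) 0 := dist_triangle _ _ _
      have hdc : dist x (f j) = dist z x := by rw [hzf, dist_comm]
      have hε1 : ε ≤ dist x 0 / 2 :=
        le_trans (min_le_left _ _) (min_le_left _ _)
      rw [hdc] at htri
      linarith
    · have hjmem : j ∈ Finset.Icc J2 J1 :=
        Finset.mem_Icc.mpr ⟨le_of_lt (not_le.mp hc2), le_of_lt (not_le.mp hc1)⟩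
      have hzS : z ∈ S.erase x :=
        Finset.mem_erase.mpr ⟨hzx, Finset.mem_image.mpr ⟨j, hjmem, hzf.symm⟩⟩
      have hρz := hρle z hzS
      have hερ : ε ≤ ρ := min_le_right _ _
      linarith


end
end
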